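/- arXiv:hep-th/0702190 — 5 statements merged into one kernel-verified Lean document; each statement's English description precedes it below -/
import Mathlib

section
/- Let B be an n×n complex matrix which is regular (admits a cyclic vector) and symmetric (Bᵀ = B). If g is a complex orthogonal matrix (gᵀg = 1) commuting with B (gB = Bg), then g² = 1. -/
/-!
A matrix commuting with a matrix `B` that has a cyclic vector `v` is determined by where it
sends `v`, and every vector is `p(B) v` for some polynomial `p`; hence it is a polynomial in `B`.
A polynomial in a symmetric matrix is symmetric, so an orthogonal `g` commuting with `B` satisfies
`g ^ 2 = gᵀ g = 1`.
-/

open Matrix Polynomial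

namespace Matrix

variable {R m : Type*} [CommSemiring R] [Fintype m] [DecidableEq m]

theorem IsSymm.aeval {B : Matrix m m R} (hB : B.IsSymm) (p : R[X]) : (aeval B p).IsSymm := by
  induction p using Polynomial.induction_on' with
  | add p q hp hq => simpa only [map_add] using hp.add hq
  | monomial k a => simpa only [aeval_monomial, ← Algebra.smul_def] using (hB.pow k).smul a

def IsCyclicVector (B : Matrix m m R) (v : m → R) : Prop :=
  Submodule.span R (Set.range fun k : ℕ => (B ^ k) *ᵥ v) = ⊤

namespace IsCyclicVector

variable {B : Matrix m m R} {v : m → R}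

theorem exists_aeval_mulVec_eq (hv : B.IsCyclicVector v) (x : m → R) :
    ∃ p : R[X], aeval B p *ᵥ v = x := by
  have hx : x ∈ Submodule.span R (Set.range fun k : ℕ => (B ^ k) *ᵥ v) := hv ▸ Submodule.mem_top
  induction hx using Submodule.span_induction with
  | mem _ hy =>
    obtain ⟨k, rfl⟩ := hy
    exact ⟨X ^ k, by rw [aeval_X_pow]⟩
  | zero => exact ⟨0, by simp⟩
  | add _ _ _ _ hy hz =>
    obtain ⟨p, rfl⟩ := hy
    obtain ⟨q, rfl⟩ := hz
    exact ⟨p + q, by rw [map_add, add_mulVec]⟩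
  | smul a _ _ hy =>
    obtain ⟨p, rfl⟩ := hy
    exact ⟨a • p, by rw [map_smul, smul_mulVec]⟩

theorem eq_of_commute_of_mulVec_eq {A C : Matrix m m R} (hv : B.IsCyclicVector v)
    (hA : Commute A B) (hC : Commute C B) (h : A *ᵥ v = C *ᵥ v) : A = C := by
  refine toLin'.injective (LinearMap.ext_on_range hv fun k => ?_)
  simp only [toLin'_apply, mulVec_mulVec, (hA.pow_right k).eq, (hC.pow_right k).eq]
  rw [← mulVec_mulVec, h, mulVec_mulVec]

theorem exists_eq_aeval_of_commute {g : Matrix m m R} (hv : B.IsCyclicVector v)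
    (hg : Commute g B) : ∃ p : R[X], g = aeval B p := by
  obtain ⟨p, hp⟩ := hv.exists_aeval_mulVec_eq (g *ᵥ v)
  have hpB : Commute (aeval B p) B := by simpa using (Commute.all p X).map (aeval B)
  exact ⟨p, hv.eq_of_commute_of_mulVec_eq hg hpB hp.symm⟩

end IsCyclicVector

end Matrix

/-- If `B` is a regular (admitting a cyclic vector) symmetric complex matrix and `g` is a
complex orthogonal matrix commuting with `B`, then `g ^ 2 = 1`. -/
theorem orth_commute_regular_symm_sq_eq_one (n : ℕ) (B g : Matrix (Fin n) (Fin n) ℂ)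
    (hreg : ∃ v : Fin n → ℂ,
      LinearIndependent ℂ (fun i : Fin n => (B ^ (i : ℕ)) *ᵥ v) ∧
      Submodule.span ℂ (Set.range fun i : Fin n => (B ^ (i : ℕ)) *ᵥ v) = ⊤)
    (hsymm : Bᵀ = B)
    (horth : gᵀ * g = 1)
    (hcomm : g * B = B * g) :
    g ^ 2 = 1 := by
  obtain ⟨v, -, hspan⟩ := hreg
  have hcyc : B.IsCyclicVector v :=
    eq_top_iff.2 (hspan ▸ Submodule.span_mono (Set.range_subset_iff.2 fun i => ⟨i, rfl⟩))
  obtain ⟨p, rfl⟩ := hcyc.exists_eq_aeval_of_commute hcomm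
  simpa only [sq, (IsSymm.aeval hsymm p).eq] using horth
end

section
/- Let G be a subgroup of the real orthogonal group O(n,ℝ) such that every element g ∈ G satisfies g² = 1. Then G is finite. -/
/-!
View `O(n, ℝ)` as the unitary group of the C⋆-algebra of real `n × n` matrices with the `L²`
operator norm. If `g ≠ h` lie in `G`, then `k = g⁻¹ h` is a self-adjoint involution `≠ 1`, so
`x = 1 - k` satisfies `x⋆ x = 2 x`, and the C⋆-identity `‖x⋆ x‖ = ‖x‖²` forces
`‖g - h‖ = ‖x‖ = 2`. Hence `G` is a `2`-separated subset of the bounded set `O(n, ℝ)` in a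
finite-dimensional space, and is therefore finite.
-/

open Metric in
theorem TotallyBounded.finite_of_pairwise_le_dist {X : Type*} [PseudoMetricSpace X] {s : Set X}
    (hs : TotallyBounded s) {ε : ℝ} (hε : 0 < ε) (hsep : s.Pairwise (ε ≤ dist · ·)) :
    s.Finite := by
  obtain ⟨t, ht, hst⟩ := totallyBounded_iff.mp hs (ε / 2) (half_pos hε)
  refine (ht.biUnion fun y _ => Set.Subsingleton.finite (s := s ∩ ball y (ε / 2)) ?_).subset ?_
  · rintro x ⟨hxs, hx⟩ z ⟨hzs, hz⟩
    by_contra hxz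
    linarith [hsep hxs hzs hxz, dist_triangle_right x z y, mem_ball.mp hx, mem_ball.mp hz]
  · intro x hx
    obtain ⟨y, hy, hxy⟩ := Set.mem_iUnion₂.mp (hst hx)
    exact Set.mem_iUnion₂.mpr ⟨y, hy, hx, hxy⟩

section CStarRing

variable {A : Type*} [NormedRing A] [StarRing A] [CStarRing A]

theorem CStarRing.isBounded_unitary : Bornology.IsBounded (unitary A : Set A) := by
  rcases subsingleton_or_nontrivial A with hA | hA
  · exact (Set.toFinite _).isBounded
  · exact isBounded_iff_forall_norm_le.2 ⟨1, fun u hu => (CStarRing.norm_of_mem_unitary hu).le⟩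

variable [NormedSpace ℝ A]

theorem IsSelfAdjoint.norm_one_sub_eq_two {k : A} (hk : IsSelfAdjoint k) (hkk : k * k = 1)
    (hk1 : k ≠ 1) : ‖1 - k‖ = 2 := by
  have hx : star (1 - k) * (1 - k) = (2 : ℝ) • (1 - k) := by
    rw [star_sub, star_one, hk.star_eq, two_smul]
    noncomm_ring
    rw [hkk]
    abel
  have hnorm : ‖1 - k‖ * ‖1 - k‖ = 2 * ‖1 - k‖ := by
    rw [← CStarRing.norm_star_mul_self, hx, norm_smul, Real.norm_two]
  have hne : ‖1 - k‖ ≠ 0 := norm_ne_zero_iff.mpr (sub_ne_zero.mpr hk1.symm)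
  exact mul_right_cancel₀ hne hnorm

theorem Unitary.norm_sub_eq_two_of_sq_eq_one {u v : unitary A} (huv : u ≠ v)
    (h : (u⁻¹ * v) ^ 2 = 1) : ‖(u : A) - v‖ = 2 := by
  set k := u⁻¹ * v
  have hkk : k * k = 1 := by rwa [← sq]
  have hk : IsSelfAdjoint (k : A) := by
    rw [IsSelfAdjoint, ← Unitary.coe_star, Unitary.star_eq_inv, inv_eq_of_mul_eq_one_right hkk]
  have hk1 : (k : A) ≠ 1 := by
    rwa [Ne, OneMemClass.coe_eq_one, inv_mul_eq_one]
  have hv : (v : A) = u * k := by rw [← Submonoid.coe_mul, mul_inv_cancel_left]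
  rw [hv, ← mul_one_sub, CStarRing.norm_coe_unitary_mul,
    hk.norm_one_sub_eq_two (by rw [← Submonoid.coe_mul, hkk, OneMemClass.coe_one]) hk1]

theorem Unitary.finite_of_forall_sq_eq_one [ProperSpace A] (G : Subgroup (unitary A))
    (hG : ∀ g ∈ G, g ^ 2 = 1) : (G : Set (unitary A)).Finite := by
  set S : Set A := (↑) '' (G : Set (unitary A))
  have hS : TotallyBounded S := by
    have hbdd : Bornology.IsBounded S :=
      CStarRing.isBounded_unitary.subset (Set.image_subset_iff.mpr fun u _ => u.2)
    exact hbdd.isCompact_closure.totallyBounded.subset subset_closure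
  have hsep : S.Pairwise (2 ≤ dist · ·) := by
    rintro _ ⟨u, hu, rfl⟩ _ ⟨v, hv, rfl⟩ huv
    rw [dist_eq_norm, Unitary.norm_sub_eq_two_of_sq_eq_one (fun h => huv (congrArg _ h))
      (hG _ (G.mul_mem (G.inv_mem hu) hv))]
  exact (hS.finite_of_pairwise_le_dist two_pos hsep).of_finite_image Subtype.val_injective.injOn

end CStarRing

open scoped Matrix.Norms.L2Operator in
/-- A subgroup of the real orthogonal group `O(n, ℝ)` all of whose elements square to the
identity is finite. -/
theorem subgroup_orthogonal_involutions_finite (n : ℕ)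
    (G : Subgroup (Matrix.orthogonalGroup (Fin n) ℝ))
    (hG : ∀ g ∈ G, g ^ 2 = 1) :
    (G : Set (Matrix.orthogonalGroup (Fin n) ℝ)).Finite :=
  Unitary.finite_of_forall_sq_eq_one G hG
end

section
/- Let b ∈ ℂ^k, let B = B(b) be the associated companion-type matrix, and let u ∈ ℂ^k be a row vector (covector). There exists an invertible matrix X ∈ M_k(ℂ) such that XBX⁻¹ = B and uX⁻¹ = (0,…,0,1) if and only if u·v ≠ 0 for every eigenvector v of B (i.e. for every v ≠ 0 with Bv = λv for some λ ∈ ℂ). Moreover, if such an X exists, it is unique. -/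
open Matrix

def compMat {k : ℕ} (b : Fin k → ℂ) : Matrix (Fin k) (Fin k) ℂ :=
  Matrix.of fun i j =>
    if (j : ℕ) = k - 1 then b i else if (i : ℕ) = (j : ℕ) + 1 then 1 else 0

def lastCovec (k : ℕ) : Fin k → ℂ :=
  fun j => if (j : ℕ) = k - 1 then 1 else 0

variable {k : ℕ}

lemma compMat_apply (b : Fin k → ℂ) (i j : Fin k) :
    compMat b i j = (if (i:ℕ) = (j:ℕ) + 1 then (1:ℂ) else 0)
      + (if (j:ℕ) = k - 1 then b i else 0) := by
  unfold compMat
  simp only [of_apply]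
  by_cases h1 : (j:ℕ) = k - 1
  · have hik := i.isLt
    have hjk := j.isLt
    simp [h1, show ¬((i:ℕ) = k - 1 + 1) from by omega]
  · simp [h1]

lemma sum_ite_point (p : Fin k) (f : Fin k → ℂ) (c : Fin k → Prop) [DecidablePred c]
    (hc : ∀ j, c j ↔ j = p) : (∑ j : Fin k, if c j then f j else 0) = f p := by
  simp only [hc]
  simp

lemma mulVec_compMat (b : Fin k → ℂ) (hk : 0 < k) (v : Fin k → ℂ) (i : Fin k) :
    (compMat b *ᵥ v) i =
      (if h : 1 ≤ (i:ℕ) then v ⟨(i:ℕ) - 1, by have := i.isLt; omega⟩ else 0)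
        + b i * v ⟨k-1, by omega⟩ := by
  have hi := i.isLt
  unfold Matrix.mulVec dotProduct
  simp only [compMat_apply, add_mul, Finset.sum_add_distrib]
  congr 1
  · by_cases h : 1 ≤ (i:ℕ)
    · rw [dif_pos h]
      have : ∀ j : Fin k, ((i:ℕ) = (j:ℕ) + 1) ↔ j = ⟨(i:ℕ)-1, by omega⟩ := by
        intro j; rw [Fin.ext_iff]; simp; omega
      calc (∑ j : Fin k, (if (i:ℕ) = (j:ℕ)+1 then (1:ℂ) else 0) * v j)
          = ∑ j : Fin k, (if (i:ℕ) = (j:ℕ)+1 then v j else 0) := by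
            refine Finset.sum_congr rfl fun j _ => ?_; split <;> simp
        _ = v ⟨(i:ℕ)-1, by omega⟩ := sum_ite_point _ v _ this
    · rw [dif_neg h]
      refine Finset.sum_eq_zero fun j _ => ?_
      have : ¬ ((i:ℕ) = (j:ℕ)+1) := by omega
      simp [this]
  · have : ∀ j : Fin k, ((j:ℕ) = k - 1) ↔ j = ⟨k-1, by omega⟩ := by
      intro j; rw [Fin.ext_iff]
    calc (∑ j : Fin k, (if (j:ℕ) = k-1 then b i else 0) * v j)
        = ∑ j : Fin k, (if (j:ℕ) = k-1 then b i * v j else 0) := by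
          refine Finset.sum_congr rfl fun j _ => ?_; split <;> simp
      _ = b i * v ⟨k-1, by omega⟩ := sum_ite_point _ _ _ this

lemma vecMul_compMat (b : Fin k → ℂ) (w : Fin k → ℂ) (j : Fin k) (hj : (j:ℕ) ≠ k-1) :
    (w ᵥ* compMat b) j = w ⟨(j:ℕ)+1, by have := j.isLt; omega⟩ := by
  have hjk := j.isLt
  unfold Matrix.vecMul dotProduct
  have hcond : ∀ i : Fin k, ((i:ℕ) = (j:ℕ) + 1) ↔ i = ⟨(j:ℕ)+1, by omega⟩ := by
    intro i; rw [Fin.ext_iff]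
  calc (∑ i : Fin k, w i * compMat b i j)
      = ∑ i : Fin k, (if (i:ℕ) = (j:ℕ)+1 then w i else 0) := by
        refine Finset.sum_congr rfl fun i _ => ?_
        rw [compMat_apply, if_neg hj, add_zero]
        split <;> simp
    _ = w ⟨(j:ℕ)+1, by omega⟩ := sum_ite_point _ w _ hcond

lemma lastCovec_dot (hk : 0 < k) (w : Fin k → ℂ) :
    lastCovec k ⬝ᵥ w = w ⟨k-1, by omega⟩ := by
  unfold dotProduct lastCovec
  calc (∑ j : Fin k, (if (j:ℕ) = k-1 then (1:ℂ) else 0) * w j)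
      = ∑ j : Fin k, (if (j:ℕ) = k-1 then w j else 0) := by
        refine Finset.sum_congr rfl fun j _ => ?_; split <;> simp
    _ = w ⟨k-1, by omega⟩ := sum_ite_point _ w _ (fun j => by rw [Fin.ext_iff])

lemma vecMul_pow (b : Fin k → ℂ) (m : ℕ) (hm : m ≤ k-1) :
    (∀ j : Fin k, (j:ℕ) < k-1-m → (lastCovec k ᵥ* (compMat b)^m) j = 0) ∧
    (∀ j : Fin k, (j:ℕ) = k-1-m → (lastCovec k ᵥ* (compMat b)^m) j = 1) := by
  induction m with
  | zero =>
    rw [pow_zero, Matrix.vecMul_one]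
    constructor <;> intro j hj
    · exact if_neg (by omega)
    · exact if_pos (by omega)
  | succ m ih =>
    obtain ⟨ih0, ih1⟩ := ih (by omega)
    rw [pow_succ, ← Matrix.vecMul_vecMul]
    constructor <;> intro j hj <;> have hjk := j.isLt
    · rw [vecMul_compMat b _ j (by omega)]
      exact ih0 ⟨(j:ℕ)+1, by omega⟩ (by simp; omega)
    · rw [vecMul_compMat b _ j (by omega)]
      exact ih1 ⟨(j:ℕ)+1, by omega⟩ (by simp; omega)

/-- the matrix whose `m`-th row is `e ᵥ* B^(k-1-m)` -/
noncomputable def triM (b : Fin k → ℂ) : Matrix (Fin k) (Fin k) ℂ :=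
  Matrix.of fun m j => (lastCovec k ᵥ* (compMat b)^(k-1-(m:ℕ))) j

lemma triM_det (b : Fin k → ℂ) : IsUnit (triM b).det := by
  have ht : (triM b).BlockTriangular id := by
    intro m j h
    have hm := m.isLt
    have hjj := j.isLt
    exact (vecMul_pow b (k-1-(m:ℕ)) (by omega)).1 j (by simp at h; omega)
  rw [Matrix.det_of_upperTriangular ht]
  have hd : ∀ m : Fin k, triM b m m = 1 := fun m =>
    (vecMul_pow b (k-1-(m:ℕ)) (by omega)).2 m (by have := m.isLt; omega)
  rw [Finset.prod_congr rfl (fun m _ => hd m), Finset.prod_const_one]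
  exact isUnit_one

lemma vecMul_sum_smul (v c : Fin k → ℂ) (f : Fin k → Matrix (Fin k) (Fin k) ℂ) :
    v ᵥ* (∑ m : Fin k, c m • f m) = fun j => ∑ m : Fin k, c m * (v ᵥ* f m) j := by
  funext j
  simp only [Matrix.vecMul, dotProduct, Matrix.sum_apply, Matrix.smul_apply,
    smul_eq_mul, Finset.mul_sum]
  rw [Finset.sum_comm]
  refine Finset.sum_congr rfl fun m _ => Finset.sum_congr rfl fun i _ => by ring

lemma existsCommX (b u : Fin k → ℂ) :
    ∃ X : Matrix (Fin k) (Fin k) ℂ,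
      X * compMat b = compMat b * X ∧ lastCovec k ᵥ* X = u := by
  set c : Fin k → ℂ := u ᵥ* (triM b)⁻¹ with hc
  refine ⟨∑ m : Fin k, c m • (compMat b)^(k-1-(m:ℕ)), ?_, ?_⟩
  · rw [Finset.sum_mul, Finset.mul_sum]
    refine Finset.sum_congr rfl fun m _ => ?_
    rw [smul_mul_assoc, mul_smul_comm,
      ((Commute.refl (compMat b)).pow_left (k-1-(m:ℕ))).eq]
  · have hu : c ᵥ* triM b = u := by
      rw [hc, Matrix.vecMul_vecMul, Matrix.nonsing_inv_mul _ (triM_det b),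
        Matrix.vecMul_one]
    rw [← hu, vecMul_sum_smul]
    funext j
    unfold Matrix.vecMul dotProduct triM
    simp only [Matrix.of_apply]
    rfl

lemma comm_unique (b : Fin k → ℂ) (Y : Matrix (Fin k) (Fin k) ℂ)
    (hcomm : Y * compMat b = compMat b * Y) (h0 : lastCovec k ᵥ* Y = 0) : Y = 0 := by
  have key : triM b * Y = 0 := by
    ext m j
    have hrow : (fun l => triM b m l) = lastCovec k ᵥ* (compMat b)^(k-1-(m:ℕ)) := rfl
    have : (triM b * Y) m j = ((fun l => triM b m l) ᵥ* Y) j := by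
      simp [Matrix.mul_apply, Matrix.vecMul, dotProduct]
    have hc : Commute Y (compMat b) := hcomm
    rw [this, hrow, Matrix.vecMul_vecMul, ← (hc.pow_right (k-1-(m:ℕ))).eq,
      ← Matrix.vecMul_vecMul, h0, Matrix.zero_vecMul]
    simp
  calc Y = (triM b)⁻¹ * (triM b * Y) := by
        rw [← Matrix.mul_assoc, Matrix.nonsing_inv_mul _ (triM_det b), Matrix.one_mul]
    _ = 0 := by rw [key, Matrix.mul_zero]

lemma eigvec_last (b : Fin k → ℂ) (hk : 0 < k) {μ : ℂ} {v : Fin k → ℂ}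
    (hv : compMat b *ᵥ v = μ • v) (h0 : v ⟨k-1, by omega⟩ = 0) : v = 0 := by
  have step : ∀ j : Fin k, ∀ hlt : (j:ℕ) < k-1, v j = μ * v ⟨(j:ℕ)+1, by omega⟩ := by
    intro j hj
    have hjk := j.isLt
    have h := congrFun hv ⟨(j:ℕ)+1, by omega⟩
    rw [mulVec_compMat b hk] at h
    rw [dif_pos (by simp)] at h
    have he : (⟨((⟨(j:ℕ)+1, by omega⟩ : Fin k) : ℕ) - 1, by omega⟩ : Fin k) = j :=
      Fin.ext (by simp)
    rw [he, h0, mul_zero, add_zero] at h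
    simpa using h
  have main : ∀ d : ℕ, ∀ j : Fin k, k-1-d ≤ (j:ℕ) → v j = 0 := by
    intro d
    induction d with
    | zero =>
      intro j hj
      have hjk := j.isLt
      have : j = ⟨k-1, by omega⟩ := Fin.ext (by simp; omega)
      rw [this]; exact h0
    | succ d ih =>
      intro j hj
      by_cases h : k-1-d ≤ (j:ℕ)
      · exact ih j h
      · have hj' : (j:ℕ) < k-1 := by omega
        rw [step j hj', ih ⟨(j:ℕ)+1, by have := j.isLt; omega⟩ (by simp; omega), mul_zero]
  funext j
  exact main k j (by omega)

lemma exists_eigvec_ker (b : Fin k → ℂ) (X : Matrix (Fin k) (Fin k) ℂ)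
    (hcomm : X * compMat b = compMat b * X) (hdet : X.det = 0) :
    ∃ (μ : ℂ) (v : Fin k → ℂ), v ≠ 0 ∧ compMat b *ᵥ v = μ • v ∧ X *ᵥ v = 0 := by
  obtain ⟨v0, hv0, hXv0⟩ := (Matrix.exists_mulVec_eq_zero_iff).mpr hdet
  set K := LinearMap.ker X.mulVecLin with hK
  have hmem : ∀ w : Fin k → ℂ, w ∈ K ↔ X *ᵥ w = 0 := by
    intro w; rw [hK, LinearMap.mem_ker, Matrix.mulVecLin_apply]
  have hstab : ∀ w ∈ K, (compMat b).mulVecLin w ∈ K := by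
    intro w hw
    rw [hmem] at hw ⊢
    rw [Matrix.mulVecLin_apply, Matrix.mulVec_mulVec, hcomm, ← Matrix.mulVec_mulVec, hw,
      Matrix.mulVec_zero]
  let f : K →ₗ[ℂ] K := ((compMat b).mulVecLin).restrict hstab
  haveI : Nontrivial K :=
    ⟨⟨⟨v0, (hmem v0).mpr hXv0⟩, 0, fun h => hv0 (congrArg Subtype.val h)⟩⟩
  obtain ⟨μ, hμ⟩ := Module.End.exists_eigenvalue f
  obtain ⟨w, hw⟩ := hμ.exists_hasEigenvector
  refine ⟨μ, w.1, fun h => hw.2 (Subtype.ext h), ?_, (hmem w.1).mp w.2⟩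
  have h2 := congrArg Subtype.val hw.apply_eq_smul
  simp only [f, LinearMap.restrict_coe_apply, Matrix.mulVecLin_apply, SetLike.val_smul] at h2
  exact h2

/-- There exists an invertible `X` with `X B X⁻¹ = B` and `u X⁻¹ = (0,…,0,1)` if and only
if `u v ≠ 0` for every eigenvector `v` of `B = B(b)`; moreover such an `X` is unique. -/
theorem exists_centraliser_conj_iff (k : ℕ) (b u : Fin k → ℂ) :
    ((∃ X : Matrix (Fin k) (Fin k) ℂ,
        IsUnit X.det ∧ X * compMat b * X⁻¹ = compMat b ∧ u ᵥ* X⁻¹ = lastCovec k) ↔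
      ∀ (μ : ℂ) (v : Fin k → ℂ), v ≠ 0 → compMat b *ᵥ v = μ • v → u ⬝ᵥ v ≠ 0) ∧
    ∀ X₁ X₂ : Matrix (Fin k) (Fin k) ℂ,
      (IsUnit X₁.det ∧ X₁ * compMat b * X₁⁻¹ = compMat b ∧ u ᵥ* X₁⁻¹ = lastCovec k) →
      (IsUnit X₂.det ∧ X₂ * compMat b * X₂⁻¹ = compMat b ∧ u ᵥ* X₂⁻¹ = lastCovec k) →
      X₁ = X₂ := by
  have hcomm : ∀ X : Matrix (Fin k) (Fin k) ℂ, IsUnit X.det →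
      X * compMat b * X⁻¹ = compMat b → X * compMat b = compMat b * X := by
    intro X hd hcnj
    have h1 : X * compMat b * X⁻¹ * X = compMat b * X := by rw [hcnj]
    rwa [Matrix.mul_assoc (X * compMat b), Matrix.nonsing_inv_mul X hd,
      Matrix.mul_one] at h1
  have hrow : ∀ X : Matrix (Fin k) (Fin k) ℂ, IsUnit X.det →
      u ᵥ* X⁻¹ = lastCovec k → lastCovec k ᵥ* X = u := by
    intro X hd hux
    have h2 := congrArg (fun w => w ᵥ* X) hux
    rw [Matrix.vecMul_vecMul, Matrix.nonsing_inv_mul X hd, Matrix.vecMul_one] at h2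
    exact h2.symm
  rcases Nat.eq_zero_or_pos k with hk | hk
  · subst hk
    refine ⟨⟨fun _ μ v hv _ => absurd (funext fun i => i.elim0) hv,
      fun _ => ⟨1, ?_, ?_, ?_⟩⟩, fun X₁ X₂ _ _ => ?_⟩
    · simp
    · ext i j; exact i.elim0
    · funext j; exact j.elim0
    · ext i j; exact i.elim0
  · refine ⟨⟨?_, ?_⟩, ?_⟩
    · rintro ⟨X, hdet, hconj, hu⟩ μ v hv hev
      have hXB := hcomm X hdet hconj
      have hu' := hrow X hdet hu
      set w := X *ᵥ v with hwdef
      have hw0 : w ≠ 0 := by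
        intro h
        apply hv
        have h3 : X⁻¹ *ᵥ w = 0 := by rw [h, Matrix.mulVec_zero]
        rwa [hwdef, Matrix.mulVec_mulVec, Matrix.nonsing_inv_mul X hdet,
          Matrix.one_mulVec] at h3
      have hwe : compMat b *ᵥ w = μ • w := by
        rw [hwdef, Matrix.mulVec_mulVec, ← hXB, ← Matrix.mulVec_mulVec, hev,
          Matrix.mulVec_smul]
      have hlast : w ⟨k-1, by omega⟩ ≠ 0 := fun h0 => hw0 (eigvec_last b hk hwe h0)
      have hvw : u ⬝ᵥ v = w ⟨k-1, by omega⟩ := by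
        rw [← hu', ← Matrix.dotProduct_mulVec, ← hwdef, lastCovec_dot hk]
      rw [hvw]; exact hlast
    · intro hyp
      obtain ⟨X, hXB, hXu⟩ := existsCommX b u
      have hdet : IsUnit X.det := by
        rw [isUnit_iff_ne_zero]
        intro h0
        obtain ⟨μ, v, hv, hev, hXv⟩ := exists_eigvec_ker b X hXB h0
        exact hyp μ v hv hev
          (by rw [← hXu, ← Matrix.dotProduct_mulVec, hXv, dotProduct_zero])
      refine ⟨X, hdet, ?_, ?_⟩
      · rw [hXB, Matrix.mul_assoc, Matrix.mul_nonsing_inv X hdet, Matrix.mul_one]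
      · rw [← hXu, Matrix.vecMul_vecMul, Matrix.mul_nonsing_inv X hdet, Matrix.vecMul_one]
    · rintro X₁ X₂ ⟨h1d, h1c, h1u⟩ ⟨h2d, h2c, h2u⟩
      have hY : X₁ - X₂ = 0 := by
        apply comm_unique b
        · rw [Matrix.sub_mul, Matrix.mul_sub, hcomm X₁ h1d h1c, hcomm X₂ h2d h2c]
        · rw [Matrix.vecMul_sub, hrow X₁ h1d h1u, hrow X₂ h2d h2u, sub_self]
      exact sub_eq_zero.mp hY
end

section
/- Let 0 < k < l and b ∈ ℂ^k. There exists an invertible matrix A ∈ GL(l,ℂ), depending only on b, with the following property: for every g ∈ ℂ^k and e ∈ ℂ^{l−k}, if B₊ ∈ M_l(ℂ) is the block matrix whose top-left k×k block is B(b), whose top-right k×(l−k) block is zero except for its last column, which equals g, whose bottom-left (l−k)×k block is zero except for the entry in its first row and last column, which equals 1, and whose bottom-right (l−k)×(l−k) block is B(e), then A·B₊·A⁻¹ = B(b′) for some b′ ∈ ℂ^l, i.e. A conjugates B₊ to companion-type form. -/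
open Matrix

/-- The `l × l` block matrix with top-left block `B(b)`, top-right block zero except for
its last column `g`, bottom-left block zero except for a `1` in position (first row,
last column), and bottom-right block `B(e)`. -/
def blockCompMat {k l : ℕ} (hkl : k < l) (b : Fin k → ℂ) (g : Fin k → ℂ)
    (e : Fin (l - k) → ℂ) : Matrix (Fin l) (Fin l) ℂ :=
  Matrix.of fun i j =>
    if hi : (i : ℕ) < k then
      if (j : ℕ) < k then
        (if (j : ℕ) = k - 1 then b ⟨i, hi⟩ else if (i : ℕ) = (j : ℕ) + 1 then 1 else 0)
      else (if (j : ℕ) = l - 1 then g ⟨i, hi⟩ else 0)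
    else
      if (j : ℕ) < k then (if (i : ℕ) = k ∧ (j : ℕ) = k - 1 then 1 else 0)
      else
        (if (j : ℕ) = l - 1 then e ⟨(i : ℕ) - k, by have := i.isLt; omega⟩
         else if (i : ℕ) = (j : ℕ) + 1 then 1 else 0)

/-- There is an invertible matrix `A`, depending only on `b`, conjugating every block
matrix of the above form to companion-type form. -/
theorem exists_conj_to_companion (k l : ℕ) (hk : 0 < k) (hkl : k < l) (b : Fin k → ℂ) :
    ∃ A : Matrix (Fin l) (Fin l) ℂ, IsUnit A.det ∧
      ∀ (g : Fin k → ℂ) (e : Fin (l - k) → ℂ),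
        ∃ b' : Fin l → ℂ, A * blockCompMat hkl b g e * A⁻¹ = compMat b' := by
  have hl : 0 < l := hk.trans hkl
  set M0 : Matrix (Fin l) (Fin l) ℂ := blockCompMat hkl b 0 0 with hM0def
  -- any of the block matrices agrees with M0 outside column `l-1`
  have hcol : ∀ (g : Fin k → ℂ) (e : Fin (l - k) → ℂ) (i m : Fin l), (m : ℕ) ≠ l - 1 →
      blockCompMat hkl b g e i m = M0 i m := by
    intro g e i m hm
    simp only [hM0def, blockCompMat, of_apply]
    split_ifs <;> simp_all
  -- below the subdiagonal, M0 vanishes; on the subdiagonal it is 1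
  have hsub : ∀ i m : Fin l, (m : ℕ) + 1 ≤ (i : ℕ) →
      M0 i m = if (i : ℕ) = (m : ℕ) + 1 then 1 else 0 := by
    intro i m him
    have hik := i.isLt
    have hmk := m.isLt
    simp only [hM0def, blockCompMat, of_apply]
    split_ifs <;> simp_all <;> omega
  -- the cyclic vectors
  set e0 : Fin l → ℂ := Pi.single ⟨0, hl⟩ 1 with he0
  set v : ℕ → Fin l → ℂ := fun j => (M0 ^ j) *ᵥ e0 with hv
  have hstep : ∀ j : ℕ, v (j + 1) = M0 *ᵥ v j := by
    intro j
    show (M0 ^ (j + 1)) *ᵥ e0 = M0 *ᵥ ((M0 ^ j) *ᵥ e0)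
    rw [pow_succ', mulVec_mulVec]
  have htri : ∀ (j : ℕ) (i : Fin l), j ≤ (i : ℕ) →
      v j i = if (i : ℕ) = j then 1 else 0 := by
    intro j
    induction j with
    | zero =>
      intro i _
      simp [hv, he0, Pi.single_apply, Fin.ext_iff, eq_comm, Matrix.one_apply]
    | succ j ih =>
      intro i hi
      have hjl : j < l := lt_of_le_of_lt (Nat.le_of_succ_le hi) i.isLt
      rw [hstep j, mulVec, dotProduct]
      rw [Finset.sum_eq_single (⟨j, hjl⟩ : Fin l)]
      · rw [ih ⟨j, hjl⟩ (le_refl j), if_pos rfl, mul_one,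
          hsub i ⟨j, hjl⟩ (by simpa using hi)]
      · intro m _ hm
        have hm' : (m : ℕ) ≠ j := fun h => hm (Fin.ext h)
        rcases lt_or_gt_of_ne hm' with h | h
        · have : M0 i m = 0 := by
            rw [hsub i m (by omega)]
            exact if_neg (by omega)
          rw [this, zero_mul]
        · have : v j m = 0 := by rw [ih m (le_of_lt h)]; exact if_neg (by omega)
          rw [this, mul_zero]
      · intro h
        exact absurd (Finset.mem_univ _) h
  -- the change-of-basis matrix
  set P : Matrix (Fin l) (Fin l) ℂ := Matrix.of (fun i j : Fin l => v (j : ℕ) i) with hP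
  have hPut : P.BlockTriangular id := by
    intro i j hij
    have hij' : (j : ℕ) < (i : ℕ) := hij
    simp only [hP, of_apply]
    rw [htri (j : ℕ) i (le_of_lt hij')]
    exact if_neg (by omega)
  have hPdet : P.det = 1 := by
    rw [Matrix.det_of_upperTriangular hPut]
    apply Finset.prod_eq_one
    intro i _
    simp only [hP, of_apply]
    rw [htri (i : ℕ) i (le_refl _)]
    simp
  have hPunit : IsUnit P.det := hPdet ▸ isUnit_one
  refine ⟨P⁻¹, Matrix.isUnit_nonsing_inv_det P hPunit, ?_⟩
  intro g e
  set B : Matrix (Fin l) (Fin l) ℂ := blockCompMat hkl b g e with hB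
  set c : Fin l → ℂ := P⁻¹ *ᵥ (B *ᵥ v (l - 1)) with hc
  refine ⟨c, ?_⟩
  have key : B * P = P * compMat c := by
    ext i j
    have lhs : (B * P) i j = (B *ᵥ v (j : ℕ)) i := by
      rw [Matrix.mul_apply, mulVec, dotProduct]
      rfl
    rw [lhs, Matrix.mul_apply]
    by_cases hj : (j : ℕ) = l - 1
    · -- last column
      have hrhs : ∑ m, P i m * compMat c m j = (P *ᵥ c) i := by
        rw [mulVec, dotProduct]
        refine Finset.sum_congr rfl fun m _ => ?_
        simp only [compMat, of_apply, if_pos hj]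
      rw [hrhs, hc, mulVec_mulVec, mulVec_mulVec, Matrix.mul_nonsing_inv P hPunit,
        ← mulVec_mulVec, one_mulVec, hj]
    · -- other columns: B *ᵥ v j = M0 *ᵥ v j = v (j+1)
      have hjl : (j : ℕ) + 1 < l := by have := j.isLt; omega
      have hBv : (B *ᵥ v (j : ℕ)) i = v ((j : ℕ) + 1) i := by
        have h1 : (B *ᵥ v (j : ℕ)) i = (M0 *ᵥ v (j : ℕ)) i := by
          simp only [mulVec, dotProduct]
          refine Finset.sum_congr rfl fun m _ => ?_
          by_cases hm : (m : ℕ) = l - 1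
          · have : v (j : ℕ) m = 0 := by
              rw [htri (j : ℕ) m (by omega)]
              exact if_neg (by omega)
            rw [this, mul_zero, mul_zero]
          · rw [hB, hcol g e i m hm]
        rw [h1, hstep (j : ℕ)]
      rw [hBv]
      rw [Finset.sum_eq_single (⟨(j : ℕ) + 1, hjl⟩ : Fin l)]
      · simp only [hP, of_apply, compMat, Matrix.of_apply]
        rw [if_neg hj]
        simp
      · intro m _ hm
        have hm' : (m : ℕ) ≠ (j : ℕ) + 1 := fun h => hm (Fin.ext h)
        simp only [compMat, of_apply]
        rw [if_neg hj, if_neg hm', mul_zero]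
      · intro h
        exact absurd (Finset.mem_univ _) h
  have hPinv : P⁻¹⁻¹ = P := Matrix.nonsing_inv_nonsing_inv P hPunit
  rw [hPinv, mul_assoc, key, ← mul_assoc, Matrix.nonsing_inv_mul P hPunit, one_mul]
end

section
/- Let z₁, z₂ ∈ ℂ with z₁ ≠ z₂ and x₁, x₂ ∈ ℝ, and set c₁(ζ) = z₁ + 2x₁ζ − z̄₁ζ², c₂(ζ) = z₂ + 2x₂ζ − z̄₂ζ². Let R = √((x₁−x₂)² + |z₁−z₂|²), ζ₁₂ = (x₁−x₂+R)/(z̄₁−z̄₂) and ζ₂₁ = (x₁−x₂−R)/(z̄₁−z̄₂). Then c₁(ζ₁₂) = c₂(ζ₁₂) and c₁(ζ₂₁) = c₂(ζ₂₁) (so ζ₁₂ and ζ₂₁ are the two intersection points of the quadratic polynomials c₁ and c₂), and ζ₁₂·conj(ζ₂₁) = −1, i.e. ζ₁₂ and ζ₂₁ are antipodal points on the Riemann sphere with respect to the real structure ζ ↦ −1/ζ̄. -/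
/-!
With `w = z₁ - z₂` and `d = x₁ - x₂`, the difference `c₁ - c₂` is the quadratic
`w + 2dζ - w̄ζ²`, whose reduced discriminant is `d² + w̄w = R²`; so its roots are `(d ± R)/w̄`.
Conjugating `ζ₂₁` turns `w̄` into `w`, and `ζ₁₂ · ζ̄₂₁ = (d² - R²)/(w̄w) = -1`.
-/

open ComplexConjugate

theorem quadratic_eq_of_mul_eq_add_of_sq_eq {K : Type*} [Field K] {a b d s ζ : K} (ha : a ≠ 0)
    (hs : s ^ 2 = d ^ 2 + a * b) (hζ : a * ζ = d + s) : b + 2 * d * ζ = a * ζ ^ 2 :=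
  mul_left_cancel₀ ha <| by linear_combination (2 * d - a * ζ - d - s) * hζ - hs

theorem div_mul_div_eq_neg_one_of_sq_eq {K : Type*} [Field K] {a b d s : K} (ha : a ≠ 0)
    (hb : b ≠ 0) (hs : s ^ 2 = d ^ 2 + a * b) : (d + s) / a * ((d - s) / b) = -1 := by
  rw [div_mul_div_comm, div_eq_iff (mul_ne_zero ha hb)]
  linear_combination -hs

theorem Complex.ofReal_sqrt_sq_add_norm_sq (d : ℝ) (w : ℂ) :
    ((√(d ^ 2 + ‖w‖ ^ 2) : ℝ) : ℂ) ^ 2 = (d : ℂ) ^ 2 + conj w * w := by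
  rw [← Complex.ofReal_pow, Real.sq_sqrt (by positivity), Complex.conj_mul']
  push_cast
  ring

/-- For two real centres `c₁(ζ) = z₁ + 2x₁ζ - z̄₁ζ²` and `c₂(ζ) = z₂ + 2x₂ζ - z̄₂ζ²` with
`z₁ ≠ z₂`, the points `ζ₁₂ = (x₁-x₂+R)/(z̄₁-z̄₂)` and `ζ₂₁ = (x₁-x₂-R)/(z̄₁-z̄₂)`, where
`R = √((x₁-x₂)² + |z₁-z₂|²)`, are intersection points of `c₁` and `c₂`, and they are
antipodal: `ζ₁₂ · conj ζ₂₁ = -1`. -/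
theorem intersection_directions_antipodal (z₁ z₂ : ℂ) (hz : z₁ ≠ z₂) (x₁ x₂ : ℝ) :
    let c₁ : ℂ → ℂ := fun ζ => z₁ + 2 * (x₁ : ℂ) * ζ - (starRingEnd ℂ) z₁ * ζ ^ 2
    let c₂ : ℂ → ℂ := fun ζ => z₂ + 2 * (x₂ : ℂ) * ζ - (starRingEnd ℂ) z₂ * ζ ^ 2
    let R : ℝ := Real.sqrt ((x₁ - x₂) ^ 2 + ‖z₁ - z₂‖ ^ 2)
    let ζ₁₂ : ℂ := ((x₁ : ℂ) - (x₂ : ℂ) + (R : ℂ)) / ((starRingEnd ℂ) z₁ - (starRingEnd ℂ) z₂)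
    let ζ₂₁ : ℂ := ((x₁ : ℂ) - (x₂ : ℂ) - (R : ℂ)) / ((starRingEnd ℂ) z₁ - (starRingEnd ℂ) z₂)
    c₁ ζ₁₂ = c₂ ζ₁₂ ∧ c₁ ζ₂₁ = c₂ ζ₂₁ ∧ ζ₁₂ * (starRingEnd ℂ) ζ₂₁ = -1 := by
  intro c₁ c₂ R ζ₁₂ ζ₂₁
  have hw : z₁ - z₂ ≠ 0 := sub_ne_zero.mpr hz
  have ha : conj z₁ - conj z₂ ≠ 0 := by rwa [← map_sub, map_ne_zero]
  have hR : (R : ℂ) ^ 2 = ((x₁ : ℂ) - x₂) ^ 2 + (conj z₁ - conj z₂) * (z₁ - z₂) := by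
    rw [Complex.ofReal_sqrt_sq_add_norm_sq, map_sub, Complex.ofReal_sub]
  have intersect : ∀ s ζ : ℂ, s ^ 2 = (R : ℂ) ^ 2 → (conj z₁ - conj z₂) * ζ = x₁ - x₂ + s →
      c₁ ζ = c₂ ζ := fun s ζ hs hζ => by
    linear_combination quadratic_eq_of_mul_eq_add_of_sq_eq ha (hs.trans hR) hζ
  refine ⟨intersect R ζ₁₂ rfl (mul_div_cancel₀ _ ha),
    intersect (-R) ζ₂₁ (neg_sq _) (by rw [mul_div_cancel₀ _ ha, sub_eq_add_neg]), ?_⟩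
  have hconj : conj ζ₂₁ = ((x₁ : ℂ) - x₂ - R) / (z₁ - z₂) := by
    simp only [ζ₂₁, map_div₀, map_sub, Complex.conj_ofReal, Complex.conj_conj]
  rw [hconj]
  exact div_mul_div_eq_neg_one_of_sq_eq ha hw hR
end
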